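/- Let p, q, s, t ∈ ℝ² with p ≠ q and s ≠ t. If the lines p* ∩ q* and s* ∩ t* in ℝ³ coincide, then {p, q} = {s, t}. -/

import Mathlib

/-!
Writing `w = (x, y)`, the plane `u*` is `z + ‖w‖² = ‖w - u‖²`. Hence `p* ∩ q*` lies over the
perpendicular bisector of `p q`, and if it is contained in `u*` then `‖w - u‖ = ‖w - p‖` for every
`w` on that bisector. Testing this at the midpoint `m` of `p q` and at `m + (q - p)^⊥` forces
`u - p` to be parallel to `q - p` with `‖u - p‖² = ⟪u - p, q - p⟫`, i.e. `u = p` or `u = q`.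
-/

/-- The dual plane of a point `u ∈ ℝ²`. -/
def dualPlane (u : ℝ × ℝ) : Set (ℝ × ℝ × ℝ) :=
  {v | v.2.2 = -2 * u.1 * v.1 - 2 * u.2 * v.2.1 + u.1 ^ 2 + u.2 ^ 2}

lemma eq_zero_or_eq_of_cross_eq_zero_of_sq_eq_dot (a d : ℝ × ℝ)
    (hcross : a.1 * d.2 - a.2 * d.1 = 0)
    (hnorm : a.1 ^ 2 + a.2 ^ 2 = a.1 * d.1 + a.2 * d.2) :
    a = 0 ∨ a = d := by
  obtain ⟨a₁, a₂⟩ := a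
  obtain ⟨d₁, d₂⟩ := d
  dsimp only at hcross hnorm
  -- Lagrange's identity `‖a‖²‖d‖² = ⟪a, d⟫² + (a × d)²` with `‖a‖² = ⟪a, d⟫`.
  have hdot : (a₁ * d₁ + a₂ * d₂) * (d₁ ^ 2 + d₂ ^ 2 - (a₁ * d₁ + a₂ * d₂)) = 0 := by
    linear_combination (a₁ * d₂ - a₂ * d₁) * hcross - (d₁ ^ 2 + d₂ ^ 2) * hnorm
  rcases mul_eq_zero.mp hdot with h | h
  · left
    have : a₁ ^ 2 + a₂ ^ 2 = 0 := by linear_combination hnorm + h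
    simp only [Prod.mk_eq_zero]
    constructor <;> nlinarith [sq_nonneg a₁, sq_nonneg a₂]
  · right
    have : (a₁ - d₁) ^ 2 + (a₂ - d₂) ^ 2 = 0 := by linear_combination hnorm + h
    simp only [Prod.mk.injEq]
    constructor <;> nlinarith [sq_nonneg (a₁ - d₁), sq_nonneg (a₂ - d₂)]

lemma mk_mem_dualPlane_inter (p q : ℝ × ℝ) (x y : ℝ)
    (hxy : 2 * (q.1 - p.1) * x + 2 * (q.2 - p.2) * y = q.1 ^ 2 + q.2 ^ 2 - p.1 ^ 2 - p.2 ^ 2) :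
    (x, y, -2 * p.1 * x - 2 * p.2 * y + p.1 ^ 2 + p.2 ^ 2) ∈ dualPlane p ∩ dualPlane q :=
  ⟨rfl, by change _ = _; linear_combination hxy⟩

lemma eq_or_eq_of_dualPlane_inter_subset (p q u : ℝ × ℝ)
    (hsub : dualPlane p ∩ dualPlane q ⊆ dualPlane u) : u = p ∨ u = q := by
  have onBisector : ∀ x y, 2 * (q.1 - p.1) * x + 2 * (q.2 - p.2) * y
      = q.1 ^ 2 + q.2 ^ 2 - p.1 ^ 2 - p.2 ^ 2 →
      -2 * p.1 * x - 2 * p.2 * y + p.1 ^ 2 + p.2 ^ 2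
        = -2 * u.1 * x - 2 * u.2 * y + u.1 ^ 2 + u.2 ^ 2 :=
    fun x y hxy => hsub (mk_mem_dualPlane_inter p q x y hxy)
  have hmid := onBisector ((p.1 + q.1) / 2) ((p.2 + q.2) / 2) (by ring)
  have hperp := onBisector ((p.1 + q.1) / 2 - (q.2 - p.2)) ((p.2 + q.2) / 2 + (q.1 - p.1)) (by ring)
  rcases eq_zero_or_eq_of_cross_eq_zero_of_sq_eq_dot (u - p) (q - p)
      (by simp only [Prod.fst_sub, Prod.snd_sub]; linear_combination (hmid - hperp) / 2)
      (by simp only [Prod.fst_sub, Prod.snd_sub]; linear_combination -hmid) with h | h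
  · exact .inl (sub_eq_zero.mp h)
  · exact .inr (sub_left_inj.mp h)

theorem dual_lines_coincide_general (p q s t : ℝ × ℝ)
    (h : dualPlane p ∩ dualPlane q = dualPlane s ∩ dualPlane t) :
    ({p, q} : Set (ℝ × ℝ)) = {s, t} := by
  have hs := eq_or_eq_of_dualPlane_inter_subset p q s (h ▸ Set.inter_subset_left)
  have ht := eq_or_eq_of_dualPlane_inter_subset p q t (h ▸ Set.inter_subset_right)
  have hp := eq_or_eq_of_dualPlane_inter_subset s t p (h ▸ Set.inter_subset_left)
  have hq := eq_or_eq_of_dualPlane_inter_subset s t q (h ▸ Set.inter_subset_right)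
  ext x
  simp only [Set.mem_insert_iff, Set.mem_singleton_iff]
  constructor
  · rintro (rfl | rfl)
    exacts [hp, hq]
  · rintro (rfl | rfl)
    exacts [hs, ht]

/-- If the lines `p* ∩ q*` and `s* ∩ t*` coincide (with `p ≠ q`, `s ≠ t`),
then `{p, q} = {s, t}`. -/
theorem dual_lines_coincide (p q s t : ℝ × ℝ) (hpq : p ≠ q) (hst : s ≠ t)
    (h : dualPlane p ∩ dualPlane q = dualPlane s ∩ dualPlane t) :
    ({p, q} : Set (ℝ × ℝ)) = {s, t} :=
  dual_lines_coincide_general p q s t h
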